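/- Let f be convex differentiable with L-Lipschitz gradient, g closed convex, φ = f + g with nonempty minimizer set 𝒳 and minimum φ*, and γ ≥ L. Then the proximal gradient step satisfies φ(p(y)) − φ* ≤ ‖G(y)‖·d(y, 𝒳) − (1/(2γ))‖G(y)‖² for any y, where p(y) is the proximal gradient step from y and G(y) = γ(y − p(y)). -/

import Mathlib

/-!
By the descent lemma (γ ≥ L), f(p) is bounded by its quadratic model at y. Moving p towards a
minimizer x along a segment, convexity of g turns the minimality of p into the optimality
condition g(p) ≤ g(x) + ⟪∇f(y) + γ(p − y), x − p⟫; with the gradient inequality for f at y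
this gives φ(p) − φ* ≤ ⟪G, y − x⟫ − ‖G‖²/(2γ). Cauchy–Schwarz and the infimum over x ∈ 𝒳
finish the proof.
-/

open RealInnerProductSpace Metric Set Filter

abbrev Euc (n : ℕ) : Type := EuclideanSpace ℝ (Fin n)

open Topology

section Gradient

variable {E : Type*} [NormedAddCommGroup E] [InnerProductSpace ℝ E] [CompleteSpace E]
  {f : E → ℝ} {f' : E → E}

theorem HasGradientAt.hasDerivAt_comp_add_smul {v a d : E} {t : ℝ}
    (h : HasGradientAt f v (a + t • d)) :
    HasDerivAt (fun s : ℝ => f (a + s • d)) ⟪v, d⟫ t := by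
  have hline : HasDerivAt (fun s : ℝ => a + s • d) d t := by
    simpa using ((hasDerivAt_id t).smul_const d).const_add a
  simpa [InnerProductSpace.toDual_apply_apply, Function.comp_def] using
    h.hasFDerivAt.comp_hasDerivAt t hline

theorem ConvexOn.add_inner_le_of_hasGradientAt (hconv : ConvexOn ℝ univ f) {v a : E}
    (hgrad : HasGradientAt f v a) (b : E) : f a + ⟪v, b - a⟫ ≤ f b := by
  have hline : ConvexOn ℝ univ (fun s : ℝ => f (a + s • (b - a))) := by
    simpa [Function.comp_def, AffineMap.lineMap_apply, add_comm a] using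
      hconv.comp_affineMap (AffineMap.lineMap a b)
  have hderiv : HasDerivAt (fun s : ℝ => f (a + s • (b - a))) ⟪v, b - a⟫ 0 :=
    HasGradientAt.hasDerivAt_comp_add_smul (by simpa using hgrad)
  have hslope := hline.le_slope_of_hasDerivAt (mem_univ 0) (mem_univ 1) one_pos hderiv
  simp only [slope_def_field, zero_smul, add_zero, one_smul, add_sub_cancel, sub_zero,
    div_one] at hslope
  linarith

theorem le_add_inner_add_sq_of_lipschitz_gradient {L : ℝ} (hgrad : ∀ x, HasGradientAt f (f' x) x)
    (hLip : ∀ x y, ‖f' x - f' y‖ ≤ L * ‖x - y‖) (a b : E) :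
    f b ≤ f a + ⟪f' a, b - a⟫ + L / 2 * ‖b - a‖ ^ 2 := by
  set d := b - a
  have hderiv (t : ℝ) : HasDerivAt (fun s : ℝ => f (a + s • d)) ⟪f' (a + t • d), d⟫ t :=
    (hgrad _).hasDerivAt_comp_add_smul
  have hbound (t : ℝ) (ht : 0 ≤ t) : ⟪f' (a + t • d), d⟫ ≤ ⟪f' a, d⟫ + L * ‖d‖ ^ 2 * t := by
    have hcs := real_inner_le_norm (f' (a + t • d) - f' a) d
    have hlip : ‖f' (a + t • d) - f' a‖ ≤ L * (t * ‖d‖) := by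
      simpa [norm_smul, abs_of_nonneg ht] using hLip (a + t • d) a
    rw [inner_sub_left] at hcs
    nlinarith [norm_nonneg d]
  have hB (t : ℝ) : HasDerivAt (fun s : ℝ => f a + ⟪f' a, d⟫ * s + L * ‖d‖ ^ 2 / 2 * s ^ 2)
      (⟪f' a, d⟫ + L * ‖d‖ ^ 2 * t) t := by
    refine ((((hasDerivAt_id t).const_mul ⟪f' a, d⟫).const_add (f a)).add
      ((hasDerivAt_pow 2 t).const_mul (L * ‖d‖ ^ 2 / 2))).congr_deriv ?_
    norm_num; ring
  have key := image_le_of_deriv_right_le_deriv_boundary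
    (fun t _ => (hderiv t).continuousAt.continuousWithinAt) (fun t _ => (hderiv t).hasDerivWithinAt)
    (by simp) (fun t _ => (hB t).continuousAt.continuousWithinAt)
    (fun t _ => (hB t).hasDerivWithinAt) (fun t ht => hbound t ht.1)
    (right_mem_Icc.2 zero_le_one)
  simp only [one_smul, mul_one, one_pow, d, add_sub_cancel] at key
  linarith

end Gradient

theorem EReal.eq_coe_sub_of_coe_add_eq_coe {a b : ℝ} {z : EReal} (hz : z ≠ ⊥)
    (h : (a : EReal) + z = b) : z = ((b - a : ℝ) : EReal) := by
  induction z with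
  | bot => exact absurd rfl hz
  | coe r =>
    norm_cast at h ⊢
    linarith
  | top => simp at h

theorem nonneg_of_forall_add_mul_nonneg {S B : ℝ} (h : ∀ t, 0 < t → t ≤ 1 → 0 ≤ S + B * t) :
    0 ≤ S := by
  have hlim : Tendsto (fun t => S + B * t) (𝓝[>] 0) (𝓝 S) := tendsto_nhdsWithin_of_tendsto_nhds <|
    (show Continuous fun t : ℝ => S + B * t by fun_prop).tendsto' 0 S (by simp)
  refine ge_of_tendsto hlim ?_
  filter_upwards [Ioo_mem_nhdsGT one_pos] with t ht using h t ht.1 ht.2.le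

theorem le_mul_infDist_of_forall_le_mul_dist {α : Type*} [PseudoMetricSpace α] {s : Set α}
    (hs : s.Nonempty) {c r : ℝ} (hr : 0 ≤ r) {y : α} (h : ∀ x ∈ s, c ≤ r * dist y x) :
    c ≤ r * infDist y s := by
  have : Nonempty s := hs.to_subtype
  rw [infDist_eq_iInf, Real.mul_iInf_of_nonneg hr]
  exact le_ciInf fun x => h x x.2

section ProxModel

variable {E : Type*} [NormedAddCommGroup E] [InnerProductSpace ℝ E]

theorem le_add_inner_of_isMin_prox_model {g : E → EReal}
    (hgconv : ∀ x y : E, ∀ a b : ℝ, 0 ≤ a → 0 ≤ b → a + b = 1 →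
      g (a • x + b • y) ≤ (a : EReal) * g x + (b : EReal) * g y)
    {γ c : ℝ} {v y P x : E} {gP gx : ℝ} (hgP : g P = gP) (hgx : g x = gx)
    (hmin : ∀ z, ((c + ⟪v, P - y⟫ + γ / 2 * ‖P - y‖ ^ 2 : ℝ) : EReal) + g P
        ≤ ((c + ⟪v, z - y⟫ + γ / 2 * ‖z - y‖ ^ 2 : ℝ) : EReal) + g z) :
    gP ≤ gx + ⟪v + γ • (P - y), x - P⟫ := by
  set S := gx + ⟪v + γ • (P - y), x - P⟫ - gP
  -- comparing `P` with `P + t • (x - P)` yields `0 ≤ t * S + t ^ 2 * (γ / 2 * ‖x - P‖ ^ 2)`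
  suffices 0 ≤ S by linarith
  refine nonneg_of_forall_add_mul_nonneg (B := γ / 2 * ‖x - P‖ ^ 2) fun t ht0 _ => ?_
  set z := P + t • (x - P)
  have hgz : g z ≤ (((1 - t) * gP + t * gx : ℝ) : EReal) := by
    have hz : z = (1 - t) • P + t • x := by module
    rw [hz]
    calc g ((1 - t) • P + t • x) ≤ ((1 - t : ℝ) : EReal) * g P + (t : EReal) * g x :=
          hgconv P x (1 - t) t (by linarith) ht0.le (by ring)
      _ = (((1 - t) * gP + t * gx : ℝ) : EReal) := by rw [hgP, hgx]; norm_cast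
  have hle : c + ⟪v, P - y⟫ + γ / 2 * ‖P - y‖ ^ 2 + gP
      ≤ c + ⟪v, z - y⟫ + γ / 2 * ‖z - y‖ ^ 2 + ((1 - t) * gP + t * gx) := by
    have := (hmin z).trans (add_le_add_right hgz _)
    rwa [hgP, ← EReal.coe_add, ← EReal.coe_add, EReal.coe_le_coe_iff] at this
  have hzy : z - y = (P - y) + t • (x - P) := by simp only [z]; abel
  have hexpand : ‖z - y‖ ^ 2 = ‖P - y‖ ^ 2 + 2 * t * ⟪P - y, x - P⟫ + t ^ 2 * ‖x - P‖ ^ 2 := by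
    rw [hzy, norm_add_sq_real, real_inner_smul_right, norm_smul, Real.norm_of_nonneg ht0.le]
    ring
  rw [hexpand, hzy, inner_add_right, real_inner_smul_right] at hle
  have hS : S = gx + ⟪v, x - P⟫ + γ * ⟪P - y, x - P⟫ - gP := by
    simp only [S, inner_add_left, real_inner_smul_left]; ring
  refine le_of_mul_le_mul_left ?_ ht0
  rw [hS]
  nlinarith

end ProxModel

section ProxGrad

variable {E : Type*} [NormedAddCommGroup E] [InnerProductSpace ℝ E] [CompleteSpace E]
  {f : E → ℝ} {f' : E → E}

theorem prox_grad_gap_le_inner {L γ : ℝ} (hLγ : L ≤ γ) (hγ : 0 < γ) (hconv : ConvexOn ℝ univ f)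
    (hgrad : ∀ x, HasGradientAt f (f' x) x) (hLip : ∀ x y, ‖f' x - f' y‖ ≤ L * ‖x - y‖)
    {y P x : E} {gP gx : ℝ} (hopt : gP ≤ gx + ⟪f' y + γ • (P - y), x - P⟫) :
    f P + gP - (f x + gx) ≤ ⟪γ • (y - P), y - x⟫ - 1 / (2 * γ) * ‖γ • (y - P)‖ ^ 2 := by
  have hdescent := le_add_inner_add_sq_of_lipschitz_gradient hgrad hLip y P
  have hsupport := hconv.add_inner_le_of_hasGradientAt (hgrad y) x
  have hnorm : 1 / (2 * γ) * ‖γ • (y - P)‖ ^ 2 = γ / 2 * ‖P - y‖ ^ 2 := by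
    rw [norm_smul, Real.norm_of_nonneg hγ.le, norm_sub_rev]
    field_simp
  have hinner : ⟪f' y + γ • (P - y), x - P⟫
      = ⟪f' y, x - y⟫ - ⟪f' y, P - y⟫ + γ * ⟪P - y, x - y⟫ - γ * ‖P - y‖ ^ 2 := by
    rw [show x - P = (x - y) - (P - y) by abel]
    generalize x - y = u, P - y = w
    simp only [inner_add_left, inner_sub_right, real_inner_smul_left, real_inner_self_eq_norm_sq]
    ring
  have hG : ⟪γ • (y - P), y - x⟫ = γ * ⟪P - y, x - y⟫ := by
    rw [real_inner_smul_left, ← inner_neg_neg, neg_sub, neg_sub]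
  rw [hnorm, hG]
  nlinarith [mul_le_mul_of_nonneg_right hLγ (sq_nonneg ‖P - y‖)]

end ProxGrad

theorem stmt_17_general {n : ℕ} (L γ : ℝ) (hL : 0 < L) (hγ : γ ≥ L)
    (f : Euc n → ℝ) (f' : Euc n → Euc n) (g : Euc n → EReal)
    (hconv : ConvexOn ℝ Set.univ f)
    (hgrad : ∀ x, HasGradientAt f (f' x) x)
    (hLip : ∀ x y, ‖f' x - f' y‖ ≤ L * ‖x - y‖)
    (hgbot : ∀ x, g x ≠ ⊥)
    (hgconv : ∀ x y : Euc n, ∀ a b : ℝ, 0 ≤ a → 0 ≤ b → a + b = 1 →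
      g (a • x + b • y) ≤ (a : EReal) * g x + (b : EReal) * g y)
    (p : Euc n → Euc n)
    (hp : ∀ xb x, ((f xb + ⟪f' xb, p xb - xb⟫ + γ / 2 * ‖p xb - xb‖ ^ 2 : ℝ) : EReal) + g (p xb)
        ≤ ((f xb + ⟪f' xb, x - xb⟫ + γ / 2 * ‖x - xb‖ ^ 2 : ℝ) : EReal) + g x)
    (X : Set (Euc n))
    (hX : X = {x | ∀ y, (f x : EReal) + g x ≤ (f y : EReal) + g y})
    (xs : Euc n) (hxs : xs ∈ X)
    (fstar : ℝ) (hstar : (f xs : EReal) + g xs = (fstar : ℝ))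
    : ∀ y, (f (p y) : EReal) + g (p y) ≤
      ((fstar + (‖γ • (y - p y)‖ * Metric.infDist y X
        - 1 / (2 * γ) * ‖γ • (y - p y)‖ ^ 2) : ℝ) : EReal) := by
  intro y
  have hγ0 : 0 < γ := hL.trans_le hγ
  have hgX : ∀ x ∈ X, g x = ((fstar - f x : ℝ) : EReal) := by
    intro x hx
    rw [hX] at hx hxs
    exact EReal.eq_coe_sub_of_coe_add_eq_coe (hgbot x)
      (le_antisymm ((hx xs).trans_eq hstar) (hstar ▸ hxs x))
  obtain ⟨gP, hgP⟩ : ∃ gP : ℝ, g (p y) = gP := by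
    have hne_top : g (p y) ≠ ⊤ := by
      intro htop
      have := hp y xs
      rw [htop, hgX xs hxs, EReal.add_top_of_ne_bot (EReal.coe_ne_bot _), ← EReal.coe_add,
        top_le_iff] at this
      exact EReal.coe_ne_top _ this
    exact ⟨(g (p y)).toReal, (EReal.coe_toReal hne_top (hgbot _)).symm⟩
  have hgap : ∀ x ∈ X, f (p y) + gP - fstar + 1 / (2 * γ) * ‖γ • (y - p y)‖ ^ 2
      ≤ ‖γ • (y - p y)‖ * dist y x := by
    intro x hx
    have hopt := le_add_inner_of_isMin_prox_model hgconv hgP (hgX x hx) (hp y)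
    have hkey := prox_grad_gap_le_inner hγ hγ0 hconv hgrad hLip hopt
    have hcs := real_inner_le_norm (γ • (y - p y)) (y - x)
    rw [dist_eq_norm]
    linarith
  have := le_mul_infDist_of_forall_le_mul_dist ⟨xs, hxs⟩ (norm_nonneg _) hgap
  rw [hgP, ← EReal.coe_add, EReal.coe_le_coe_iff]
  linarith

theorem stmt_17 {n : ℕ} (L γ : ℝ) (hL : 0 < L) (hγ : γ ≥ L)
    (f : Euc n → ℝ) (f' : Euc n → Euc n) (g : Euc n → EReal)
    (hconv : ConvexOn ℝ Set.univ f)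
    (hgrad : ∀ x, HasGradientAt f (f' x) x)
    (hLip : ∀ x y, ‖f' x - f' y‖ ≤ L * ‖x - y‖)
    (hgbot : ∀ x, g x ≠ ⊥) (hgtop : ∃ x, g x ≠ ⊤)
    (hglsc : LowerSemicontinuous g)
    (hgconv : ∀ x y : Euc n, ∀ a b : ℝ, 0 ≤ a → 0 ≤ b → a + b = 1 →
      g (a • x + b • y) ≤ (a : EReal) * g x + (b : EReal) * g y)
    (p : Euc n → Euc n)
    (hp : ∀ xb x, ((f xb + ⟪f' xb, p xb - xb⟫ + γ / 2 * ‖p xb - xb‖ ^ 2 : ℝ) : EReal) + g (p xb)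
        ≤ ((f xb + ⟪f' xb, x - xb⟫ + γ / 2 * ‖x - xb‖ ^ 2 : ℝ) : EReal) + g x)
    (X : Set (Euc n))
    (hX : X = {x | ∀ y, (f x : EReal) + g x ≤ (f y : EReal) + g y})
    (hne : X.Nonempty)
    (xs : Euc n) (hxs : xs ∈ X)
    (fstar : ℝ) (hstar : (f xs : EReal) + g xs = (fstar : ℝ))
    : ∀ y, (f (p y) : EReal) + g (p y) ≤
      ((fstar + (‖γ • (y - p y)‖ * Metric.infDist y X
        - 1 / (2 * γ) * ‖γ • (y - p y)‖ ^ 2) : ℝ) : EReal) :=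
  stmt_17_general L γ hL hγ f f' g hconv hgrad hLip hgbot hgconv p hp X hX xs hxs fstar hstar
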